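/- arXiv:2605.00622 — 3 statements merged into one kernel-verified Lean document; each statement's English description precedes it below -/
import Mathlib

section
/- Let P_0 and R_0 be non-isomorphic posets, each of size m, and let i > m. Then the set D_{m+i+1}(P_iR_i) has a witness (namely P_iR_i itself), it consists of k = C(P_0R_0) + ⌈(i−m)/2⌉ isomorphism classes of posets of size n = m+i+1, its smallest witness has size |P_iR_i| = 2m + 2i, and for any constant c ∈ ℕ, the smallest witness size 2m + 2i is strictly greater than n + k + c whenever i − ⌈(i−m)/2⌉ > 1 + C(P_0R_0) − m + c. -/
/-!
Formalization framework: finite posets are bundled as `FinPartOrd.{0}`, downsets are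
`Finset`s of elements, unlabelled posets are isomorphism classes (`UPoset`), and a witness
of a set `Γ` of unlabelled posets at size `n` is a finite poset whose set of size-`n`
downsets, up to isomorphism, is exactly `Γ`.
-/

attribute [local instance] Classical.propDecidable

noncomputable section

open Finset

/-- `D` is a downset of the finite poset `Q`. -/
def IsDownset (Q : FinPartOrd.{0}) (D : Finset ↥Q) : Prop :=
  ∀ ⦃a b : ↥Q⦄, a ∈ D → b ≤ a → b ∈ D

/-- The induced subposet of `Q` on a finset `D` of its elements. -/
def subposet (Q : FinPartOrd.{0}) (D : Finset ↥Q) : FinPartOrd.{0} :=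
  FinPartOrd.of {x : ↥Q // x ∈ D}

/-- The isomorphism setoid on finite posets. -/
def isoSetoid : Setoid FinPartOrd.{0} where
  r P Q := Nonempty (↥P ≃o ↥Q)
  iseqv := ⟨fun _ => ⟨OrderIso.refl _⟩, fun ⟨e⟩ => ⟨e.symm⟩, fun ⟨e⟩ ⟨f⟩ => ⟨e.trans f⟩⟩

/-- Unlabelled finite posets: isomorphism classes of finite posets. -/
def UPoset := Quotient isoSetoid

/-- The isomorphism class of a finite poset. -/
def cls (P : FinPartOrd.{0}) : UPoset := Quotient.mk isoSetoid P

/-- The number of elements of a finite poset. -/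
def size (Q : FinPartOrd.{0}) : ℕ := Fintype.card ↥Q

/-- The size of an isomorphism class of finite posets. -/
def usize : UPoset → ℕ :=
  Quotient.lift size fun _ _ h => h.elim fun e => Fintype.card_congr e.toEquiv

/-- `D_n(Q)` : the set of downsets of `Q` of size `n`, up to isomorphism. -/
def DSet (n : ℕ) (Q : FinPartOrd.{0}) : Set UPoset :=
  {c | ∃ D : Finset ↥Q, IsDownset Q D ∧ D.card = n ∧ cls (subposet Q D) = c}

/-- `d_n(Q)` : the number of isomorphism classes of downsets of `Q` of size `n`. -/
def dNum (n : ℕ) (Q : FinPartOrd.{0}) : ℕ := (DSet n Q).ncard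

/-- `D(Q)` : the set of nonempty downsets of `Q`, up to isomorphism. -/
def DAllSet (Q : FinPartOrd.{0}) : Set UPoset :=
  {c | ∃ D : Finset ↥Q, IsDownset Q D ∧ D.Nonempty ∧ cls (subposet Q D) = c}

/-- `Q` is a witness of the set `Γ` of unlabelled posets (at size `n`): the set of size-`n`
downsets of `Q`, up to isomorphism, is exactly `Γ`. -/
def IsWitness (n : ℕ) (Γ : Set UPoset) (Q : FinPartOrd.{0}) : Prop := DSet n Q = Γ

/-- `Q` is a minimal witness of `Γ` : `Q` is a witness and no proper downset of `Q` is
itself a witness of `Γ`. -/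
def IsMinimalWitness (n : ℕ) (Γ : Set UPoset) (Q : FinPartOrd.{0}) : Prop :=
  IsWitness n Γ Q ∧
    ∀ D : Finset ↥Q, IsDownset Q D → D ≠ Finset.univ → ¬IsWitness n Γ (subposet Q D)

/-- The height of an element: the number of elements of a longest chain whose maximum is `x`. -/
def heightEl (Q : FinPartOrd.{0}) (x : ↥Q) : ℕ :=
  sSup {k | ∃ c : Finset ↥Q, IsChain (· ≤ ·) (c : Set ↥Q) ∧ x ∈ c ∧ (∀ y ∈ c, y ≤ x) ∧ c.card = k}

/-- The height of a finite poset: the number of elements of a longest chain. -/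
def posetHeight (Q : FinPartOrd.{0}) : ℕ :=
  sSup {k | ∃ c : Finset ↥Q, IsChain (· ≤ ·) (c : Set ↥Q) ∧ c.card = k}

/-- A finite poset is Newtonian if every element of level `i` covers every element of
level `i - 1`. -/
def Newtonian (Q : FinPartOrd.{0}) : Prop :=
  ∀ x y : ↥Q, heightEl Q y = heightEl Q x + 1 → x ⋖ y

/-- A finite poset is connected if it is nonempty and any two elements are joined by a
comparability path. -/
def ConnectedPoset (Q : FinPartOrd.{0}) : Prop :=
  Nonempty ↥Q ∧ ∀ x y : ↥Q, Relation.ReflTransGen (fun a b : ↥Q => a ≤ b ∨ b ≤ a) x y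

/-- `x` is a maximal element of the subset `W` of `Q`. -/
def IsMaxIn (Q : FinPartOrd.{0}) (W : Finset ↥Q) (x : ↥Q) : Prop :=
  x ∈ W ∧ ∀ y ∈ W, x ≤ y → y = x

/-- `x` is a maximal element of the finite poset `R`. -/
def IsMaxEl (R : FinPartOrd.{0}) (x : ↥R) : Prop := ∀ y, x ≤ y → y = x

/-- A poset of type 𝒲 : the disjoint union of two connected Newtonian posets that are not
isomorphic, but which only differ in one maximal element (they become isomorphic after the
removal of a suitable maximal element from each). -/
def TypeW (P : FinPartOrd.{0}) : Prop :=
  ∃ W₁ W₂ : Finset ↥P,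
    W₁ ∪ W₂ = Finset.univ ∧ Disjoint W₁ W₂ ∧
    (∀ x ∈ W₁, ∀ y ∈ W₂, ¬x ≤ y ∧ ¬y ≤ x) ∧
    ConnectedPoset (subposet P W₁) ∧ ConnectedPoset (subposet P W₂) ∧
    Newtonian (subposet P W₁) ∧ Newtonian (subposet P W₂) ∧
    ¬Nonempty (↥(subposet P W₁) ≃o ↥(subposet P W₂)) ∧
    ∃ x y, IsMaxIn P W₁ x ∧ IsMaxIn P W₂ y ∧
      Nonempty (↥(subposet P (W₁.erase x)) ≃o ↥(subposet P (W₂.erase y)))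

/-- An antichain on `i` elements. -/
def AntichainFin (i : ℕ) : Type := Fin i

instance (i : ℕ) : PartialOrder (AntichainFin i) where
  le x y := x = y
  le_refl _ := rfl
  le_trans a b c h₁ h₂ := show a = c from (show a = b from h₁).trans (show b = c from h₂)
  le_antisymm _ _ h _ := h

instance (i : ℕ) : Fintype (AntichainFin i) := inferInstanceAs (Fintype (Fin i))
instance (i : ℕ) : Fintype (WithTop (AntichainFin i)) :=
  inferInstanceAs (Fintype (Option (Fin i)))

/-- `Λ_i`: the poset with `i` minimal elements and one maximal element above all of them. -/
def Lambda (i : ℕ) : FinPartOrd.{0} := FinPartOrd.of (WithTop (AntichainFin i))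

/-- `k` disjoint copies of a poset `α`. -/
def Copies (k : ℕ) (α : Type) : Type := Fin k × α

instance (k : ℕ) (α : Type) [PartialOrder α] : PartialOrder (Copies k α) where
  le x y := x.1 = y.1 ∧ x.2 ≤ y.2
  le_refl _ := ⟨rfl, le_refl _⟩
  le_trans _ _ _ h₁ h₂ := ⟨h₁.1.trans h₂.1, le_trans h₁.2 h₂.2⟩
  le_antisymm x y h₁ h₂ := by
    obtain ⟨x₁, x₂⟩ := x
    obtain ⟨y₁, y₂⟩ := y
    obtain ⟨h, h'⟩ := h₁
    cases h
    exact congrArg _ (le_antisymm h' h₂.2)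

instance (k : ℕ) (α : Type) [Fintype α] : Fintype (Copies k α) :=
  inferInstanceAs (Fintype (Fin k × α))

/-- `H_ℓ`: the poset whose connected components are `ℓ` copies of `Λ₂` and one copy of
`Λ_{3(ℓ-1)}`. -/
def Hposet (ℓ : ℕ) : FinPartOrd.{0} :=
  FinPartOrd.of (Copies ℓ (WithTop (AntichainFin 2)) ⊕ WithTop (AntichainFin (3 * (ℓ - 1))))

/-- The poset `P₀` placed above a chain of `i` elements. -/
def withChain (P₀ : FinPartOrd.{0}) (i : ℕ) : FinPartOrd.{0} :=
  FinPartOrd.of (Fin i ⊕ₗ ↥P₀)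

/-- The disjoint union of two finite posets. -/
def disjSum (P R : FinPartOrd.{0}) : FinPartOrd.{0} := FinPartOrd.of (↥P ⊕ ↥R)

/-- The poset `P_iR_i`: the disjoint union of `P₀` and `R₀` each placed above a chain of
`i` elements. -/
def PRposet (P₀ R₀ : FinPartOrd.{0}) (i : ℕ) : FinPartOrd.{0} :=
  disjSum (withChain P₀ i) (withChain R₀ i)

/-- `C(P₀R₀) = |D(P₀)| + |D(R₀)| − |D(P₀) ∩ D(R₀)|`. -/
def CNum (P₀ R₀ : FinPartOrd.{0}) : ℕ :=
  (DAllSet P₀).ncard + (DAllSet R₀).ncard - (DAllSet P₀ ∩ DAllSet R₀).ncard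

/-- The vertices of the exchange graph: the downsets of `Q` of size `n`, as actual subsets. -/
def EGVert (n : ℕ) (Q : FinPartOrd.{0}) : Type :=
  {D : Finset ↥Q // IsDownset Q D ∧ D.card = n}

/-- The exchange graph `G_n(Q)`: two size-`n` downsets are adjacent iff they differ by
exactly one element. -/
def ExchangeGraph (n : ℕ) (Q : FinPartOrd.{0}) : SimpleGraph (EGVert n Q) where
  Adj X Y := (X.1 \ Y.1).card = 1 ∧ (Y.1 \ X.1).card = 1
  symm := ⟨fun X Y h => ⟨h.2, h.1⟩⟩
  loopless := ⟨fun X h => by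
    simp only [Finset.sdiff_self, Finset.card_empty] at h
    exact absurd h.1 (by simp)⟩

/-- The downset `D` of `Q`, viewed as a poset, is isomorphic (a "copy of") `P`. -/
def IsoTo (Q : FinPartOrd.{0}) (D : Finset ↥Q) (P : FinPartOrd.{0}) : Prop :=
  Nonempty (↥(subposet Q D) ≃o ↥P)

/-- A path `A :: M ++ [C]` in the exchange graph `G_n(Q)` whose first vertex is a copy of
`Pa`, whose last vertex is a copy of `Pb`, and all of whose internal vertices are copies of
`Pmid`. -/
def SpecialPath (n : ℕ) (Q : FinPartOrd.{0}) (Pa Pmid Pb : FinPartOrd.{0})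
    (A : EGVert n Q) (M : List (EGVert n Q)) (C : EGVert n Q) : Prop :=
  List.Chain' (ExchangeGraph n Q).Adj (A :: M ++ [C]) ∧
    IsoTo Q A.1 Pa ∧ IsoTo Q C.1 Pb ∧ ∀ v ∈ M, IsoTo Q v.1 Pmid

/-- `T` is an antichain in `Q`. -/
def IsAntichainIn (Q : FinPartOrd.{0}) (T : Finset ↥Q) : Prop :=
  ∀ x ∈ T, ∀ y ∈ T, x ≤ y → x = y

/-- The possible shapes of `A \ X` and `C \ X`: an antichain possibly together with a single
element below all of it and/or a single element above all of it, or a two-element chain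
together with one incomparable element. -/
def GoodForm (Q : FinPartOrd.{0}) (S : Finset ↥Q) : Prop :=
  (∃ T : Finset ↥Q, IsAntichainIn Q T ∧
    (S = T ∨
      (∃ b, b ∉ T ∧ S = insert b T ∧ ∀ x ∈ T, b < x) ∨
      (∃ t, t ∉ T ∧ S = insert t T ∧ ∀ x ∈ T, x < t) ∨
      (∃ b t, b ∉ T ∧ t ∉ T ∧ b ≠ t ∧ S = insert b (insert t T) ∧
        (∀ x ∈ T, b < x) ∧ ∀ x ∈ T, x < t))) ∨
  (∃ x y z : ↥Q, S = {x, y, z} ∧ x ≠ y ∧ x ≠ z ∧ y ≠ z ∧ x < y ∧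
    ¬x ≤ z ∧ ¬z ≤ x ∧ ¬y ≤ z ∧ ¬z ≤ y)

/-!
A downset of `P_iR_i` is a pair of downsets of `P_i` and `R_i`, and a downset of `P_i` is either
an initial segment of the chain or the whole chain with a downset of `P₀` on top. For size
`n = m + i + 1` and `i > m` at most one side can reach its top, so `D_n(P_iR_i)` consists of the
`C(P₀R₀)` classes `(Fin i ⊕ₗ E) ⊕ Fin (m + 1 - |E|)` and the `⌈(i - m)/2⌉` classes
`Fin a ⊕ Fin (n - a)` with `m < a ≤ n/2`. These are told apart by the number of elements below
each element: in `Fin i ⊕ₗ E` the elements of `E` are exactly those with more than `i` of them.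

A witness `Q` contains downsets isomorphic to `P_i ⊕ 1` and `R_i ⊕ 1`, hence downsets `B ≅ P_i` and
`B' ≅ R_i`, each with a least element. If they meet and `B' ⊄ B`, adding to `B` a minimal element
of `B' \ B` gives a downset of size `n` with a least element, which no member of `D_n(P_iR_i)` has
(it meets both components). So `B = B'`, impossible as `P₀ ≇ R₀`, or `|Q| ≥ |B| + |B'|`.
-/

lemma cls_eq_cls_iff {P Q : FinPartOrd.{0}} : cls P = cls Q ↔ Nonempty (↥P ≃o ↥Q) :=
  Quotient.eq

lemma size_subposet (Q : FinPartOrd.{0}) (D : Finset ↥Q) : size (subposet Q D) = #D :=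
  Fintype.card_coe D

lemma card_le_size {Q : FinPartOrd.{0}} (D : Finset ↥Q) : #D ≤ size Q :=
  D.card_le_univ

lemma isDownset_iff_isLowerSet (Q : FinPartOrd.{0}) (D : Finset ↥Q) :
    IsDownset Q D ↔ IsLowerSet (D : Set ↥Q) :=
  ⟨fun h _ _ hba ha => h ha hba, fun h _ _ ha hba => h hba ha⟩

section Embeddings

variable {α β γ : Type*}

def OrderEmbedding.orderIsoOfCoeEqRange [Preorder α] [Preorder β] (f : α ↪o β) {D : Finset β}
    (hD : (D : Set β) = Set.range f) : D ≃o α :=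
  (OrderIso.setCongr _ _ hD).trans f.orderIso.symm

def lexInl [LE α] [LE β] : α ↪o α ⊕ₗ β :=
  ⟨⟨toLex ∘ Sum.inl, toLex.injective.comp Sum.inl_injective⟩, Sum.Lex.inl_le_inl_iff⟩

def lexInr [LE α] [LE β] : β ↪o α ⊕ₗ β :=
  ⟨⟨toLex ∘ Sum.inr, toLex.injective.comp Sum.inr_injective⟩, Sum.Lex.inr_le_inr_iff⟩

def lexMapRight [Preorder α] [Preorder β] [Preorder γ] (g : β ↪o γ) : α ⊕ₗ β ↪o α ⊕ₗ γ :=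
  RelEmbedding.sumLexMap (RelEmbedding.refl _) g

def sumInl [LE α] [LE β] : α ↪o α ⊕ β := RelEmbedding.sumLiftRelInl _ _

def Finset.disjSumEmb [Preorder α] [Preorder β] (s : Finset α) (t : Finset β) : s ⊕ t ↪o α ⊕ β :=
  RelEmbedding.sumLiftRelMap (OrderEmbedding.subtype (· ∈ s)) (OrderEmbedding.subtype (· ∈ t))

lemma Finset.coe_disjSum_eq_range [Preorder α] [Preorder β] (s : Finset α) (t : Finset β) :
    (s.disjSum t : Set (α ⊕ β)) = Set.range (s.disjSumEmb t) := by
  ext (a | b) <;> simp [Finset.disjSumEmb, RelEmbedding.sumLiftRelMap]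

end Embeddings

section LowerSets

variable {α β : Type*}

lemma OrderEmbedding.exists_finset_coe_eq_range [Fintype α] [Preorder α] [Preorder β]
    (f : α ↪o β) :
    ∃ D : Finset β, (D : Set β) = Set.range f ∧ #D = Fintype.card α ∧ Nonempty (D ≃o α) := by
  have hD : ((Finset.univ.map f.toEmbedding : Finset β) : Set β) = Set.range f := by simp
  exact ⟨_, hD, by simp, ⟨f.orderIsoOfCoeEqRange hD⟩⟩

lemma isLowerSet_coe_disjSum [Preorder α] [Preorder β] {s : Finset α} {t : Finset β} :
    IsLowerSet (s.disjSum t : Set (α ⊕ β)) ↔ IsLowerSet (s : Set α) ∧ IsLowerSet (t : Set β) := by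
  refine ⟨fun h => ⟨fun a b hba ha => ?_, fun a b hba ha => ?_⟩, fun ⟨hs, ht⟩ => ?_⟩
  · simpa using h (Sum.inl_le_inl_iff.mpr hba) (by simpa using ha)
  · simpa using h (Sum.inr_le_inr_iff.mpr hba) (by simpa using ha)
  · rintro (a | b) (a' | b') h hx
    · simpa using hs (Sum.inl_le_inl_iff.mp h) (by simpa using hx)
    · exact absurd h Sum.not_inr_le_inl
    · exact absurd h Sum.not_inl_le_inr
    · simpa using ht (Sum.inr_le_inr_iff.mp h) (by simpa using hx)

def Finset.disjSumOrderIso [Preorder α] [Preorder β] (s : Finset α) (t : Finset β) :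
    s.disjSum t ≃o s ⊕ t :=
  (s.disjSumEmb t).orderIsoOfCoeEqRange (s.coe_disjSum_eq_range t)

lemma IsLowerSet.lex_cases [Fintype α] [Fintype β] [Preorder α] [Preorder β]
    {D : Finset (α ⊕ₗ β)} (hD : IsLowerSet (D : Set (α ⊕ₗ β))) :
    (∃ s : Finset α, Nonempty (D ≃o s)) ∨
      ∃ E : Finset β, IsLowerSet (E : Set β) ∧ E.Nonempty ∧ Nonempty (D ≃o α ⊕ₗ E) := by
  by_cases hb : ∃ b, lexInr b ∈ D
  · obtain ⟨b, hb⟩ := hb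
    let E := Finset.univ.filter (fun q => lexInr q ∈ D)
    have hE : ∀ q, q ∈ E ↔ lexInr q ∈ D := fun q => by
      simp only [E, Finset.mem_filter, Finset.mem_univ, true_and]
    let f : α ⊕ₗ E ↪o α ⊕ₗ β := lexMapRight (OrderEmbedding.subtype (· ∈ E))
    have hDf : (D : Set (α ⊕ₗ β)) = Set.range f := by
      ext x
      obtain ⟨a | q, rfl⟩ := toLex.surjective x
      · exact iff_of_true (hD (Sum.Lex.inl_le_inr a b) hb) ⟨toLex (Sum.inl a), rfl⟩
      · refine ⟨fun hq => ⟨toLex (Sum.inr ⟨q, (hE q).mpr hq⟩), rfl⟩, ?_⟩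
        rintro ⟨y, hy⟩
        obtain ⟨a | ⟨q', hq'⟩, rfl⟩ := toLex.surjective y
        · cases hy
        · cases hy
          exact (hE q').mp hq'
    refine Or.inr ⟨E, fun p q hqp hp => ?_, ⟨b, (hE b).mpr hb⟩, ⟨f.orderIsoOfCoeEqRange hDf⟩⟩
    exact (hE q).mpr (hD (Sum.Lex.inr_le_inr_iff.mpr hqp) ((hE p).mp hp))
  · push Not at hb
    let s := Finset.univ.filter (fun a => lexInl a ∈ D)
    have hs : ∀ a, a ∈ s ↔ lexInl a ∈ D := fun a => by
      simp only [s, Finset.mem_filter, Finset.mem_univ, true_and]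
    let f : s ↪o α ⊕ₗ β := (OrderEmbedding.subtype (· ∈ s)).trans lexInl
    have hDf : (D : Set (α ⊕ₗ β)) = Set.range f := by
      ext x
      obtain ⟨a | q, rfl⟩ := toLex.surjective x
      · exact ⟨fun ha => ⟨⟨a, (hs a).mpr ha⟩, rfl⟩, fun ⟨⟨a', ha'⟩, h⟩ => by
          cases h; exact (hs a').mp ha'⟩
      · refine iff_of_false (hb q) ?_
        rintro ⟨_, h⟩
        cases h
    exact Or.inl ⟨s, ⟨f.orderIsoOfCoeEqRange hDf⟩⟩

lemma IsLowerSet.finLex_cases {i : ℕ} [Fintype β] [Preorder β] {D : Finset (Fin i ⊕ₗ β)}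
    (hD : IsLowerSet (D : Set (Fin i ⊕ₗ β))) :
    (#D ≤ i ∧ Nonempty (D ≃o Fin #D)) ∨
      ∃ E : Finset β, IsLowerSet (E : Set β) ∧ E.Nonempty ∧ #D = i + #E ∧
        Nonempty (D ≃o Fin i ⊕ₗ E) := by
  rcases hD.lex_cases with ⟨s, ⟨e⟩⟩ | ⟨E, hE, hne, ⟨e⟩⟩
  · have hcard : #D = #s := by simpa using Fintype.card_congr e.toEquiv
    refine Or.inl ⟨hcard ▸ s.card_le_univ.trans_eq (Fintype.card_fin i),
      ⟨e.trans (s.orderIsoOfFin hcard.symm).symm⟩⟩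
  · refine Or.inr ⟨E, hE, hne, ?_, ⟨e⟩⟩
    simpa [Fintype.card_lex] using Fintype.card_congr e.toEquiv

lemma exists_isLowerSet_orderIso_fin [Preorder β] {a i : ℕ} (h : a ≤ i) :
    ∃ D : Finset (Fin i ⊕ₗ β), IsLowerSet (D : Set (Fin i ⊕ₗ β)) ∧ #D = a ∧
      Nonempty (D ≃o Fin a) := by
  obtain ⟨D, hDf, hcard, he⟩ :=
    OrderEmbedding.exists_finset_coe_eq_range ((Fin.castLEOrderEmb h).trans (lexInl (β := β)))
  refine ⟨D, ?_, by simpa using hcard, he⟩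
  rw [hDf]
  rintro _ y hy ⟨k, rfl⟩
  obtain ⟨k' | q, rfl⟩ := toLex.surjective y
  · have hk' : k' ≤ Fin.castLE h k := Sum.Lex.inl_le_inl_iff.mp hy
    exact ⟨⟨k', lt_of_le_of_lt (Fin.le_def.mp hk') k.2⟩, rfl⟩
  · exact absurd hy Sum.Lex.not_inr_le_inl

lemma exists_isLowerSet_orderIso_lex [Fintype α] [Preorder α] [Preorder β] {E : Finset β}
    (hE : IsLowerSet (E : Set β)) :
    ∃ D : Finset (α ⊕ₗ β), IsLowerSet (D : Set (α ⊕ₗ β)) ∧ #D = Fintype.card α + #E ∧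
      Nonempty (D ≃o α ⊕ₗ E) := by
  obtain ⟨D, hDf, hcard, he⟩ :=
    (lexMapRight (α := α) (OrderEmbedding.subtype (· ∈ E))).exists_finset_coe_eq_range
  refine ⟨D, ?_, by simpa [Fintype.card_lex] using hcard, he⟩
  rw [hDf]
  rintro _ y hy ⟨z, rfl⟩
  obtain ⟨a' | q', rfl⟩ := toLex.surjective y
  · exact ⟨toLex (Sum.inl a'), rfl⟩
  obtain ⟨a | ⟨q, hq⟩, rfl⟩ := toLex.surjective z
  · exact absurd hy Sum.Lex.not_inr_le_inl
  · exact ⟨toLex (Sum.inr ⟨q', hE (Sum.Lex.inr_le_inr_iff.mp hy) hq⟩), rfl⟩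

lemma mem_DSet_sum_iff {A B : Type} [PartialOrder A] [PartialOrder B] [Fintype A] [Fintype B]
    {n : ℕ} {c : UPoset} :
    c ∈ DSet n (FinPartOrd.of (A ⊕ B)) ↔
      ∃ (s : Finset A) (t : Finset B), IsLowerSet (s : Set A) ∧ IsLowerSet (t : Set B) ∧
        #s + #t = n ∧ c = cls (FinPartOrd.of (s ⊕ t)) := by
  constructor
  · rintro ⟨D, hD, rfl, rfl⟩
    obtain ⟨s, t, rfl⟩ : ∃ s t, D = Finset.disjSum s t := ⟨_, _, D.toLeft_disjSum_toRight.symm⟩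
    have hst : IsLowerSet (s.disjSum t : Set (A ⊕ B)) := (isDownset_iff_isLowerSet _ _).mp hD
    exact ⟨s, t, (isLowerSet_coe_disjSum.mp hst).1, (isLowerSet_coe_disjSum.mp hst).2,
      (Finset.card_disjSum s t).symm, cls_eq_cls_iff.mpr ⟨s.disjSumOrderIso t⟩⟩
  · rintro ⟨s, t, hs, ht, hcard, rfl⟩
    exact ⟨s.disjSum t, (isDownset_iff_isLowerSet _ _).mpr (isLowerSet_coe_disjSum.mpr ⟨hs, ht⟩),
      (Finset.card_disjSum s t).trans hcard, cls_eq_cls_iff.mpr ⟨s.disjSumOrderIso t⟩⟩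

end LowerSets

section LowerCard

variable {α β P R : Type*}

def lowerCard [Preorder α] (x : α) : ℕ := (Set.Iic x).ncard

lemma OrderIso.lowerCard_apply [Preorder α] [Preorder β] (e : α ≃o β) (x : α) :
    lowerCard (e x) = lowerCard x := by
  rw [lowerCard, lowerCard, ← e.image_Iic, Set.ncard_image_of_injective _ e.injective]

lemma lowerCard_le_card [Preorder α] [Finite α] (x : α) : lowerCard x ≤ Nat.card α :=
  Set.ncard_le_card _

lemma lowerCard_inl [Preorder α] [Preorder β] (a : α) :
    lowerCard (Sum.inl a : α ⊕ β) = lowerCard a := by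
  have h : Set.Iic (Sum.inl a : α ⊕ β) = Sum.inl '' Set.Iic a := by
    ext (a' | b) <;> simp
  rw [lowerCard, h, Set.ncard_image_of_injective _ Sum.inl_injective, lowerCard]

lemma lowerCard_inr [Preorder α] [Preorder β] (b : β) :
    lowerCard (Sum.inr b : α ⊕ β) = lowerCard b := by
  have h : Set.Iic (Sum.inr b : α ⊕ β) = Sum.inr '' Set.Iic b := by
    ext (a | b') <;> simp
  rw [lowerCard, h, Set.ncard_image_of_injective _ Sum.inr_injective, lowerCard]

lemma lowerCard_toLex_inl_le [Preorder α] [Preorder β] [Fintype α] (a : α) :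
    lowerCard (toLex (Sum.inl a) : α ⊕ₗ β) ≤ Fintype.card α := by
  have h : Set.Iic (toLex (Sum.inl a) : α ⊕ₗ β) ⊆ Set.range (lexInl : α ↪o α ⊕ₗ β) := by
    intro y hy
    obtain ⟨a' | b, rfl⟩ := toLex.surjective y
    · exact ⟨a', rfl⟩
    · exact absurd hy Sum.Lex.not_inr_le_inl
  calc lowerCard (toLex (Sum.inl a) : α ⊕ₗ β)
      ≤ (Set.range (lexInl : α ↪o α ⊕ₗ β)).ncard := Set.ncard_le_ncard h (Set.finite_range _)
    _ = Fintype.card α := by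
      rw [Set.ncard_range_of_injective lexInl.injective, Nat.card_eq_fintype_card]

lemma card_lt_lowerCard_toLex_inr [Preorder α] [Preorder β] [Fintype α] [Fintype β] (b : β) :
    Fintype.card α < lowerCard (toLex (Sum.inr b) : α ⊕ₗ β) := by
  let x : α ⊕ₗ β := toLex (Sum.inr b)
  have hx : x ∉ Set.range (lexInl : α ↪o α ⊕ₗ β) := by
    rintro ⟨a, h⟩
    exact Sum.inl_ne_inr (toLex.injective h)
  have h : insert x (Set.range (lexInl : α ↪o α ⊕ₗ β)) ⊆ Set.Iic x := by
    rintro _ (rfl | ⟨a, rfl⟩)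
    · exact Set.mem_Iic.mpr le_rfl
    · exact Sum.Lex.inl_le_inr a b
  calc Fintype.card α
      < (insert x (Set.range (lexInl : α ↪o α ⊕ₗ β))).ncard := by
        rw [Set.ncard_insert_of_notMem hx, Set.ncard_range_of_injective lexInl.injective,
          Nat.card_eq_fintype_card]
        exact Nat.lt_succ_self _
    _ ≤ lowerCard x := Set.ncard_le_ncard h

lemma lowerCard_fin_last (n : ℕ) : lowerCard (Fin.last n) = n + 1 := by
  rw [lowerCard, ← Fin.top_eq_last, Set.Iic_top, Set.ncard_univ, Nat.card_eq_fintype_card,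
    Fintype.card_fin]

def tallSet (α : Type*) [Preorder α] (c : ℕ) : Set α := {x | c < lowerCard x}

lemma OrderIso.image_tallSet [Preorder α] [Preorder β] (e : α ≃o β) (c : ℕ) :
    e '' tallSet α c = tallSet β c := by
  ext y
  refine ⟨?_, fun hy => ⟨e.symm y, ?_, e.apply_symm_apply y⟩⟩
  · rintro ⟨x, hx, rfl⟩
    simpa [tallSet, e.lowerCard_apply] using hx
  · simpa [tallSet, ← e.symm.lowerCard_apply] using hy

lemma nonempty_orderIso_of_range_eq_tallSet [Preorder α] [Preorder β] [Preorder P] [Preorder R]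
    (e : α ≃o β) (f : P ↪o α) (g : R ↪o β) {c : ℕ} (hf : Set.range f = tallSet α c)
    (hg : Set.range g = tallSet β c) : Nonempty (P ≃o R) := by
  have h : Set.range (f.trans e.toOrderEmbedding) = Set.range g := by
    rw [hg, ← e.image_tallSet, ← hf, ← Set.range_comp]
    rfl
  exact ⟨(OrderEmbedding.orderIso (f := f.trans e.toOrderEmbedding)).trans
    ((OrderIso.setCongr _ _ h).trans g.orderIso.symm)⟩

lemma range_lexInr_eq_tallSet [Preorder α] [Preorder β] [Fintype α] [Fintype β] :
    Set.range (lexInr : β ↪o α ⊕ₗ β) = tallSet (α ⊕ₗ β) (Fintype.card α) := by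
  ext x
  obtain ⟨a | b, rfl⟩ := toLex.surjective x
  · refine iff_of_false ?_ (lowerCard_toLex_inl_le a).not_gt
    rintro ⟨b, h⟩
    cases h
  · exact iff_of_true ⟨b, rfl⟩ (card_lt_lowerCard_toLex_inr b)

lemma range_sumInl_comp_eq_tallSet [Preorder α] [Preorder β] [Preorder P] {c : ℕ} (f : P ↪o α)
    (hf : Set.range f = tallSet α c) (hβ : ∀ y : β, lowerCard y ≤ c) :
    Set.range (f.trans (sumInl (β := β))) = tallSet (α ⊕ β) c := by
  ext (a | b)
  · change _ ↔ c < lowerCard (Sum.inl a : α ⊕ β)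
    rw [lowerCard_inl]
    change _ ↔ a ∈ tallSet α c
    rw [← hf]
    exact ⟨fun ⟨p, hp⟩ => ⟨p, Sum.inl_injective hp⟩, fun ⟨p, hp⟩ => ⟨p, congrArg Sum.inl hp⟩⟩
  · refine iff_of_false (fun ⟨_, hp⟩ => Sum.inl_ne_inr hp) ?_
    simpa [tallSet, lowerCard_inr] using hβ b

end LowerCard

section Ladder

variable {P₀ R₀ : FinPartOrd.{0}} {m i n : ℕ}

/-- The class of the size-`(m + i + 1)` downsets of `P_iR_i` made of one whole chain with a
downset `E` on top of it and `m + 1 - |E|` elements of the other chain. -/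
def raisedClass (i m : ℕ) : UPoset → UPoset :=
  Quotient.lift (fun E : FinPartOrd.{0} =>
      cls (FinPartOrd.of ((Fin i ⊕ₗ E) ⊕ Fin (m + 1 - size E)))) fun E E' ⟨e⟩ =>
    cls_eq_cls_iff.mpr ⟨OrderIso.sumCongr (OrderIso.sumLexCongr (OrderIso.refl _) e)
      (Fin.castOrderIso (by rw [size, size, Fintype.card_congr e.toEquiv]))⟩

lemma raisedClass_cls_subposet (E : Finset P₀) {k : ℕ} (hk : k = m + 1 - #E) :
    raisedClass i m (cls (subposet P₀ E)) = cls (FinPartOrd.of ((Fin i ⊕ₗ E) ⊕ Fin k)) := by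
  subst hk
  rw [raisedClass, cls, Quotient.lift_mk, size_subposet]
  rfl

def twoChainClass (n a : ℕ) : UPoset := cls (FinPartOrd.of (Fin a ⊕ Fin (n - a)))

lemma mem_DSet_PRposet_iff {c : UPoset} :
    c ∈ DSet n (PRposet P₀ R₀ i) ↔
      ∃ (s : Finset (Fin i ⊕ₗ P₀)) (t : Finset (Fin i ⊕ₗ R₀)),
        IsLowerSet (s : Set (Fin i ⊕ₗ P₀)) ∧ IsLowerSet (t : Set (Fin i ⊕ₗ R₀)) ∧
          #s + #t = n ∧ c = cls (FinPartOrd.of (s ⊕ t)) :=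
  mem_DSet_sum_iff

lemma DSet_PRposet_comm (P₀ R₀ : FinPartOrd.{0}) :
    DSet n (PRposet P₀ R₀ i) = DSet n (PRposet R₀ P₀ i) := by
  have key : ∀ P₀ R₀ : FinPartOrd.{0}, DSet n (PRposet P₀ R₀ i) ⊆ DSet n (PRposet R₀ P₀ i) := by
    intro P₀ R₀ c hc
    obtain ⟨s, t, hs, ht, hcard, rfl⟩ := mem_DSet_PRposet_iff.mp hc
    exact mem_DSet_PRposet_iff.mpr
      ⟨t, s, ht, hs, by omega, cls_eq_cls_iff.mpr ⟨OrderIso.sumComm _ _⟩⟩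
  exact (key P₀ R₀).antisymm (key R₀ P₀)

lemma raisedClass_mem_DSet (hi : m < i) {E : Finset P₀} (hE : IsLowerSet (E : Set P₀))
    (hEm : #E ≤ m) :
    raisedClass i m (cls (subposet P₀ E)) ∈ DSet (m + i + 1) (PRposet P₀ R₀ i) := by
  obtain ⟨s, hs, hscard, ⟨es⟩⟩ := exists_isLowerSet_orderIso_lex (α := Fin i) hE
  obtain ⟨t, ht, htcard, ⟨et⟩⟩ :=
    exists_isLowerSet_orderIso_fin (β := R₀) (show m + 1 - #E ≤ i by omega)
  rw [raisedClass_cls_subposet E rfl]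
  exact mem_DSet_PRposet_iff.mpr ⟨s, t, hs, ht, by simp only [Fintype.card_fin] at hscard; omega,
    cls_eq_cls_iff.mpr ⟨(OrderIso.sumCongr es et).symm⟩⟩

lemma cls_fin_sum_fin_mem_DSet {a b : ℕ} (ha : a ≤ i) (hb : b ≤ i) :
    cls (FinPartOrd.of (Fin a ⊕ Fin b)) ∈ DSet (a + b) (PRposet P₀ R₀ i) := by
  obtain ⟨s, hs, hscard, ⟨es⟩⟩ := exists_isLowerSet_orderIso_fin (β := P₀) ha
  obtain ⟨t, ht, htcard, ⟨et⟩⟩ := exists_isLowerSet_orderIso_fin (β := R₀) hb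
  exact mem_DSet_PRposet_iff.mpr ⟨s, t, hs, ht, by omega,
    cls_eq_cls_iff.mpr ⟨(OrderIso.sumCongr es et).symm⟩⟩

lemma cls_fin_sum_fin_mem_image_twoChainClass {a b : ℕ} (hab : a + b = n) (ha : a ≤ i)
    (hb : b ≤ i) (hn : n = m + i + 1) :
    cls (FinPartOrd.of (Fin a ⊕ Fin b)) ∈ twoChainClass n '' Set.Icc (m + 1) (n / 2) := by
  rcases le_total a b with h | h
  · refine ⟨a, ⟨by omega, by omega⟩, cls_eq_cls_iff.mpr
      ⟨OrderIso.sumCongr (OrderIso.refl _) (Fin.castOrderIso (by omega))⟩⟩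
  · refine ⟨b, ⟨by omega, by omega⟩, cls_eq_cls_iff.mpr
      ⟨(OrderIso.sumCongr (OrderIso.refl _) (Fin.castOrderIso (by omega))).trans
        (OrderIso.sumComm _ _)⟩⟩

lemma DSet_PRposet_subset (hP : size P₀ = m) (hR : size R₀ = m) (hi : m < i) :
    DSet (m + i + 1) (PRposet P₀ R₀ i) ⊆
      raisedClass i m '' (DAllSet P₀ ∪ DAllSet R₀) ∪
        twoChainClass (m + i + 1) '' Set.Icc (m + 1) ((m + i + 1) / 2) := by
  intro c hc
  obtain ⟨s, t, hs, ht, hcard, rfl⟩ := mem_DSet_PRposet_iff.mp hc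
  rcases hs.finLex_cases with ⟨hs_le, ⟨es⟩⟩ | ⟨E, hE, hEne, hsE, ⟨es⟩⟩ <;>
    rcases ht.finLex_cases with ⟨ht_le, ⟨et⟩⟩ | ⟨F, hF, hFne, htF, ⟨et⟩⟩
  · right
    rw [(cls_eq_cls_iff (Q := FinPartOrd.of (Fin #s ⊕ Fin #t))).mpr ⟨OrderIso.sumCongr es et⟩]
    exact cls_fin_sum_fin_mem_image_twoChainClass hcard hs_le ht_le rfl
  · have hFm := hR ▸ card_le_size F
    refine Or.inl ⟨_, Or.inr ⟨F, (isDownset_iff_isLowerSet _ _).mpr hF, hFne, rfl⟩, ?_⟩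
    rw [raisedClass_cls_subposet F (k := #s) (by omega)]
    exact cls_eq_cls_iff.mpr ⟨(OrderIso.sumCongr et es).symm.trans (OrderIso.sumComm _ _)⟩
  · have hEm := hP ▸ card_le_size E
    refine Or.inl ⟨_, Or.inl ⟨E, (isDownset_iff_isLowerSet _ _).mpr hE, hEne, rfl⟩, ?_⟩
    rw [raisedClass_cls_subposet E (k := #t) (by omega)]
    exact cls_eq_cls_iff.mpr ⟨(OrderIso.sumCongr es et).symm⟩
  · have := hEne.card_pos
    omega

lemma DSet_PRposet (hP : size P₀ = m) (hR : size R₀ = m) (hi : m < i) :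
    DSet (m + i + 1) (PRposet P₀ R₀ i) =
      raisedClass i m '' (DAllSet P₀ ∪ DAllSet R₀) ∪
        twoChainClass (m + i + 1) '' Set.Icc (m + 1) ((m + i + 1) / 2) := by
  refine (DSet_PRposet_subset hP hR hi).antisymm ?_
  rintro c ((⟨_, ⟨E, hE, -, rfl⟩ | ⟨E, hE, -, rfl⟩, rfl⟩) | ⟨a, ⟨ha₁, ha₂⟩, rfl⟩)
  · exact raisedClass_mem_DSet hi ((isDownset_iff_isLowerSet _ _).mp hE) (hP ▸ card_le_size E)
  · rw [DSet_PRposet_comm]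
    exact raisedClass_mem_DSet hi ((isDownset_iff_isLowerSet _ _).mp hE) (hR ▸ card_le_size E)
  · have h := cls_fin_sum_fin_mem_DSet (P₀ := P₀) (R₀ := R₀) (i := i) (a := a) (b := m + i + 1 - a)
      (by omega) (by omega)
    rwa [Nat.add_sub_cancel' (by omega : a ≤ m + i + 1)] at h

end Ladder

section Counting

variable {F F' : Type*} [Preorder F] [Preorder F'] [Fintype F] [Fintype F'] {m i n : ℕ}

lemma range_lexInr_eq_tallSet_fin : Set.range (lexInr : F ↪o Fin i ⊕ₗ F) = tallSet _ i := by
  simpa using range_lexInr_eq_tallSet (α := Fin i) (β := F)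

lemma nonempty_orderIso_of_finLex (e : Fin i ⊕ₗ F ≃o Fin i ⊕ₗ F') : Nonempty (F ≃o F') :=
  nonempty_orderIso_of_range_eq_tallSet e lexInr lexInr range_lexInr_eq_tallSet_fin
    range_lexInr_eq_tallSet_fin

lemma nonempty_orderIso_of_finLex_sum_fin {k k' : ℕ} (hk : k ≤ i) (hk' : k' ≤ i)
    (e : (Fin i ⊕ₗ F) ⊕ Fin k ≃o (Fin i ⊕ₗ F') ⊕ Fin k') : Nonempty (F ≃o F') := by
  have h : ∀ {j : ℕ}, j ≤ i → ∀ y : Fin j, lowerCard y ≤ i := fun hj y =>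
    ((lowerCard_le_card y).trans_eq (Nat.card_fin _)).trans hj
  exact nonempty_orderIso_of_range_eq_tallSet e _ _
    (range_sumInl_comp_eq_tallSet lexInr range_lexInr_eq_tallSet_fin (h hk))
    (range_sumInl_comp_eq_tallSet lexInr range_lexInr_eq_tallSet_fin (h hk'))

lemma lowerCard_le_max {a b : ℕ} (x : Fin a ⊕ Fin b) : lowerCard x ≤ max a b := by
  rcases x with x | x
  · rw [lowerCard_inl]
    exact ((lowerCard_le_card x).trans_eq (Nat.card_fin a)).trans (le_max_left a b)
  · rw [lowerCard_inr]
    exact ((lowerCard_le_card x).trans_eq (Nat.card_fin b)).trans (le_max_right a b)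

lemma le_max_of_orderIso_sum_fin {a b a' b' : ℕ} (e : Fin a ⊕ Fin b ≃o Fin a' ⊕ Fin b')
    (hb : 0 < b) : b ≤ max a' b' := by
  obtain ⟨b, rfl⟩ := Nat.exists_eq_add_one_of_ne_zero hb.ne'
  have h := lowerCard_le_max (e (Sum.inr (Fin.last b)))
  rwa [e.lowerCard_apply, lowerCard_inr, lowerCard_fin_last] at h

lemma raisedClass_injective (hi : m < i) : Function.Injective (raisedClass i m) := by
  refine Quotient.ind₂ fun E E' h => ?_
  obtain ⟨e⟩ := cls_eq_cls_iff.mp h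
  exact cls_eq_cls_iff.mpr (nonempty_orderIso_of_finLex_sum_fin (by omega) (by omega) e)

lemma twoChainClass_injOn : Set.InjOn (twoChainClass n) (Set.Iic (n / 2)) := by
  have key : ∀ a a', a ≤ n / 2 → a' ≤ n / 2 → twoChainClass n a = twoChainClass n a' →
      a' ≤ a := by
    intro a a' ha ha' h
    rcases Nat.eq_zero_or_pos n with rfl | hn
    · omega
    obtain ⟨e⟩ := cls_eq_cls_iff.mp h
    have := le_max_of_orderIso_sum_fin e (show 0 < n - a by omega)
    omega
  intro a ha a' ha' h
  exact le_antisymm (key a' a ha' ha h.symm) (key a a' ha ha' h)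

lemma raisedClass_ne_twoChainClass {E : FinPartOrd.{0}} (hE : Nonempty E) {a : ℕ} (ha : a ≤ i)
    (hna : n - a ≤ i) : raisedClass i m (cls E) ≠ twoChainClass n a := by
  intro h
  obtain ⟨e⟩ := cls_eq_cls_iff.mp h
  obtain ⟨p⟩ := hE
  have h₁ := lowerCard_le_max (e (Sum.inl (toLex (Sum.inr p))))
  rw [e.lowerCard_apply, lowerCard_inl] at h₁
  have h₂ := card_lt_lowerCard_toLex_inr (α := Fin i) p
  rw [Fintype.card_fin] at h₂
  omega

lemma DAllSet_finite (Q : FinPartOrd.{0}) : (DAllSet Q).Finite :=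
  (Set.finite_range fun D : Finset Q => cls (subposet Q D)).subset fun _ ⟨D, _, _, hD⟩ => ⟨D, hD⟩

lemma ncard_DSet_PRposet {P₀ R₀ : FinPartOrd.{0}} (hP : size P₀ = m) (hR : size R₀ = m)
    (hi : m < i) :
    (DSet (m + i + 1) (PRposet P₀ R₀ i)).ncard = CNum P₀ R₀ + (i - m + 1) / 2 := by
  have hdisj : Disjoint (raisedClass i m '' (DAllSet P₀ ∪ DAllSet R₀))
      (twoChainClass (m + i + 1) '' Set.Icc (m + 1) ((m + i + 1) / 2)) := by
    rw [Set.disjoint_left]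
    rintro _ ⟨_, ⟨E, -, hE, rfl⟩ | ⟨E, -, hE, rfl⟩, rfl⟩ ⟨a, ⟨ha₁, ha₂⟩, h⟩ <;>
      exact raisedClass_ne_twoChainClass hE.to_subtype (by omega) (by omega) h.symm
  have hfin := (DAllSet_finite P₀).union (DAllSet_finite R₀)
  rw [DSet_PRposet hP hR hi, Set.ncard_union_eq hdisj (hfin.image _) ((Set.finite_Icc _ _).image _),
    (raisedClass_injective hi).injOn.ncard_image,
    (twoChainClass_injOn.mono Set.Icc_subset_Iic_self).ncard_image, Set.ncard_Icc_nat, CNum,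
    ← Set.ncard_union_add_ncard_inter _ _ (DAllSet_finite P₀) (DAllSet_finite R₀)]
  omega

end Counting

section WitnessSize

variable {α β Q : Type*}

lemma exists_isLowerSet_orderIso_of_orderIso_sum [Preorder Q] [Preorder α] [Preorder β] [Fintype α]
    {X : Finset Q} (hX : IsLowerSet (X : Set Q)) (e : X ≃o α ⊕ β) :
    ∃ B : Finset Q, IsLowerSet (B : Set Q) ∧ Nonempty (B ≃o α) := by
  let f : α ↪o Q := (sumInl.trans e.symm.toOrderEmbedding).trans (OrderEmbedding.subtype _)
  obtain ⟨B, hBf, -, hB⟩ := f.exists_finset_coe_eq_range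
  refine ⟨B, ?_, hB⟩
  rw [hBf]
  rintro _ y hy ⟨a, rfl⟩
  have hyX : y ∈ X := hX hy (e.symm (Sum.inl a)).2
  have hle : e ⟨y, hyX⟩ ≤ Sum.inl a := e.le_symm_apply.mp hy
  rcases h : e ⟨y, hyX⟩ with a' | b
  · refine ⟨a', ?_⟩
    change (e.symm (Sum.inl a') : Q) = y
    rw [← h, e.symm_apply_apply]
  · rw [h] at hle
    exact absurd hle Sum.not_inr_le_inl

lemma exists_isLeast_of_orderIso [Preorder Q] [Preorder α] {B : Finset Q} (e : B ≃o α) {a : α}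
    (ha : ∀ y, a ≤ y) : ∃ b, IsLeast (B : Set Q) b :=
  ⟨e.symm a, (e.symm a).2, fun x hx => (e.symm_apply_le (x := ⟨x, hx⟩)).mpr (ha _)⟩

lemma toLex_inl_zero_le [Preorder α] {i : ℕ} (hi : 0 < i) (y : Fin i ⊕ₗ α) :
    toLex (Sum.inl ⟨0, hi⟩) ≤ y := by
  obtain ⟨k | p, rfl⟩ := toLex.surjective y
  · exact Sum.Lex.inl_le_inl_iff.mpr (Fin.le_def.mpr (Nat.zero_le _))
  · exact Sum.Lex.inl_le_inr _ _

lemma eq_or_disjoint_of_isLeast [PartialOrder Q] [DecidableEq Q] {B B' : Finset Q} {b b' : Q}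
    (hB : IsLowerSet (B : Set Q)) (hB' : IsLowerSet (B' : Set Q)) (hb : IsLeast (B : Set Q) b)
    (hb' : IsLeast (B' : Set Q) b') (hcard : #B = #B')
    (hno : ∀ D : Finset Q, IsLowerSet (D : Set Q) → #D = #B + 1 → ∀ x, ¬IsLeast (D : Set Q) x) :
    B = B' ∨ Disjoint B B' := by
  by_contra! h
  obtain ⟨z, hzB, hzB'⟩ := Finset.not_disjoint_iff.mp h.2
  have hns : ¬B' ⊆ B := fun hsub => h.1 (Finset.eq_of_subset_of_card_le hsub hcard.le).symm
  obtain ⟨w, hw, hwmin⟩ := Finset.exists_minimal (Finset.sdiff_nonempty.mpr hns)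
  obtain ⟨hwB', hwB⟩ := Finset.mem_sdiff.mp hw
  have hD : IsLowerSet (insert w B : Set Q) := by
    rintro x y hyx (rfl | hx)
    · by_cases hyB : y ∈ B
      · exact Or.inr hyB
      · exact Or.inl (le_antisymm hyx (hwmin (Finset.mem_sdiff.mpr ⟨hB' hyx hwB', hyB⟩) hyx))
    · exact Or.inr (hB hyx hx)
  have hbw : b ≤ w := (hb.2 (hB (hb'.2 hzB') hzB)).trans (hb'.2 hwB')
  refine hno _ (by rwa [Finset.coe_insert]) (Finset.card_insert_of_notMem hwB) b ?_
  rw [Finset.coe_insert]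
  exact ⟨Or.inr hb.1, fun x hx => hx.elim (fun hxw => hxw ▸ hbw) (fun hxB => hb.2 hxB)⟩

end WitnessSize

section LadderWitness

variable {P₀ R₀ : FinPartOrd.{0}} {m i : ℕ}

lemma size_PRposet : size (PRposet P₀ R₀ i) = (i + size P₀) + (i + size R₀) := by
  change Fintype.card ((Fin i ⊕ₗ P₀) ⊕ (Fin i ⊕ₗ R₀)) = _
  simp [Fintype.card_sum, Fintype.card_lex, size]

lemma not_isLeast_of_cls_mem_DSet_PRposet (hP : size P₀ = m) (hR : size R₀ = m) {Q : FinPartOrd.{0}}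
    {D : Finset Q} (hD : cls (subposet Q D) ∈ DSet (m + i + 1) (PRposet P₀ R₀ i)) (b : Q) :
    ¬IsLeast (D : Set Q) b := by
  rintro ⟨hbD, hb⟩
  obtain ⟨s, t, -, -, hcard, hst⟩ := mem_DSet_PRposet_iff.mp hD
  obtain ⟨e⟩ := cls_eq_cls_iff.mp hst
  have hs : #s ≤ i + m := hP ▸ (s.card_le_univ.trans_eq (by simp [Fintype.card_lex, size]))
  have ht : #t ≤ i + m := hR ▸ (t.card_le_univ.trans_eq (by simp [Fintype.card_lex, size]))
  obtain ⟨x, hx⟩ := Finset.card_pos.mp (show 0 < #s by omega)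
  obtain ⟨y, hy⟩ := Finset.card_pos.mp (show 0 < #t by omega)
  have hle : ∀ z, e ⟨b, hbD⟩ ≤ z := fun z =>
    e.le_symm_apply.mp (hb (e.symm z).2 : (⟨b, hbD⟩ : subposet Q D) ≤ e.symm z)
  rcases h : e ⟨b, hbD⟩ with u | u <;> rw [h] at hle
  · exact Sum.not_inl_le_inr (hle (Sum.inr ⟨y, hy⟩))
  · exact Sum.not_inr_le_inl (hle (Sum.inl ⟨x, hx⟩))

lemma exists_isLowerSet_orderIso_finLex_of_DSet_eq (hP : size P₀ = m) (hi : m < i)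
    {Q : FinPartOrd.{0}}
    (hW : DSet (m + i + 1) Q = DSet (m + i + 1) (PRposet P₀ R₀ i)) :
    ∃ B : Finset Q, IsLowerSet (B : Set Q) ∧ Nonempty (B ≃o Fin i ⊕ₗ P₀) := by
  have hmem := raisedClass_mem_DSet (R₀ := R₀) hi (E := Finset.univ)
    (by rw [Finset.coe_univ]; exact isLowerSet_univ) (hP ▸ card_le_size _)
  rw [raisedClass_cls_subposet _ rfl, ← hW] at hmem
  obtain ⟨X, hX, -, hXcls⟩ := hmem
  obtain ⟨e⟩ := cls_eq_cls_iff.mp hXcls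
  obtain ⟨B, hB, ⟨eB⟩⟩ :=
    exists_isLowerSet_orderIso_of_orderIso_sum ((isDownset_iff_isLowerSet _ _).mp hX) e
  exact ⟨B, hB, ⟨eB.trans (OrderIso.sumLexCongr (OrderIso.refl _)
    ((OrderIso.setCongr _ _ Finset.coe_univ).trans OrderIso.Set.univ))⟩⟩

lemma card_eq_of_orderIso_finLex {Q P : FinPartOrd.{0}} (hP : size P = m) {B : Finset Q}
    (e : B ≃o Fin i ⊕ₗ P) : #B = i + m := by
  simpa [Fintype.card_lex, ← hP, size] using Fintype.card_congr e.toEquiv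

lemma two_mul_add_two_mul_le_size_of_isWitness (hP : size P₀ = m) (hR : size R₀ = m)
    (hniso : ¬Nonempty (P₀ ≃o R₀)) (hi : m < i) {Q : FinPartOrd.{0}}
    (hW : IsWitness (m + i + 1) (DSet (m + i + 1) (PRposet P₀ R₀ i)) Q) :
    2 * m + 2 * i ≤ size Q := by
  rw [IsWitness] at hW
  obtain ⟨B, hB, ⟨e⟩⟩ := exists_isLowerSet_orderIso_finLex_of_DSet_eq hP hi hW
  obtain ⟨B', hB', ⟨e'⟩⟩ :=
    exists_isLowerSet_orderIso_finLex_of_DSet_eq (R₀ := P₀) hR hi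
      (hW.trans (DSet_PRposet_comm P₀ R₀))
  have hcard := card_eq_of_orderIso_finLex hP e
  have hcard' := card_eq_of_orderIso_finLex hR e'
  obtain ⟨b, hb⟩ := exists_isLeast_of_orderIso e (toLex_inl_zero_le (by omega))
  obtain ⟨b', hb'⟩ := exists_isLeast_of_orderIso e' (toLex_inl_zero_le (by omega))
  have hno : ∀ D : Finset Q, IsLowerSet (D : Set Q) → #D = #B + 1 → ∀ x, ¬IsLeast (D : Set Q) x :=
    fun D hD hDcard => not_isLeast_of_cls_mem_DSet_PRposet hP hR
      (hW.subset ⟨D, (isDownset_iff_isLowerSet _ _).mpr hD, by omega, rfl⟩)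
  rcases eq_or_disjoint_of_isLeast hB hB' hb hb' (hcard.trans hcard'.symm) hno with rfl | hdisj
  · exact absurd (nonempty_orderIso_of_finLex (e.symm.trans e')) hniso
  · calc 2 * m + 2 * i = #(B ∪ B') := by rw [Finset.card_union_of_disjoint hdisj]; omega
      _ ≤ size Q := card_le_size _

end LadderWitness

/-- For non-isomorphic `P₀`, `R₀` of size `m` and `i > m`, the set
`D_{m+i+1}(P_iR_i)` has the witness `P_iR_i`, has `k = C(P₀R₀) + ⌈(i−m)/2⌉` members of size
`n = m + i + 1`, its smallest witness has size `2m + 2i`, and `2m + 2i > n + k + c` whenever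
`i − ⌈(i−m)/2⌉ > 1 + C(P₀R₀) − m + c`. -/
theorem ladder_family (m : ℕ) (P₀ R₀ : FinPartOrd.{0}) (hP : size P₀ = m) (hR : size R₀ = m)
    (hniso : ¬Nonempty (↥P₀ ≃o ↥R₀)) (i : ℕ) (hi : m < i) :
    IsWitness (m + i + 1) (DSet (m + i + 1) (PRposet P₀ R₀ i)) (PRposet P₀ R₀ i) ∧
      (DSet (m + i + 1) (PRposet P₀ R₀ i)).ncard = CNum P₀ R₀ + (i - m + 1) / 2 ∧
      (∀ x ∈ DSet (m + i + 1) (PRposet P₀ R₀ i), usize x = m + i + 1) ∧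
      size (PRposet P₀ R₀ i) = 2 * m + 2 * i ∧
      (∀ Q : FinPartOrd.{0}, IsWitness (m + i + 1) (DSet (m + i + 1) (PRposet P₀ R₀ i)) Q →
        2 * m + 2 * i ≤ size Q) ∧
      ∀ c : ℕ, 1 + CNum P₀ R₀ - m + c < i - (i - m + 1) / 2 →
        (m + i + 1) + (CNum P₀ R₀ + (i - m + 1) / 2) + c < 2 * m + 2 * i := by
  refine ⟨rfl, ncard_DSet_PRposet hP hR hi, ?_, ?_,
    fun Q hQ => two_mul_add_two_mul_le_size_of_isWitness hP hR hniso hi hQ, fun c hc => by omega⟩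
  · rintro _ ⟨D, -, hD, rfl⟩
    exact (size_subposet _ D).trans hD
  · rw [size_PRposet, hP, hR]
    ring
end
end

section
/- For every ℓ ≥ 2, the number of isomorphism classes of downsets of size 3ℓ of the poset H_ℓ satisfies d_{3ℓ}(H_ℓ) = ℓ + 2. -/
/-!
Formalization framework: finite posets are bundled as `FinPartOrd.{0}`, downsets are
`Finset`s of elements, unlabelled posets are isomorphism classes (`UPoset`), and a witness
of a set `Γ` of unlabelled posets at size `n` is a finite poset whose set of size-`n`
downsets, up to isomorphism, is exactly `Γ`.
-/

attribute [local instance] Classical.propDecidable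

noncomputable section

open Finset

/-!
In `H_ℓ` the only strict relations are `x < t` with `t` the top of the component of `x`. Hence a
downset `D` is the union of the components whose top it contains and of a set of isolated minimal
elements. A permutation of the `Λ₂` components matching the full ones, together with any bijection
between the isolated points, shows that the isomorphism type of `D` is determined by `|D|`, the
number `k` of full `Λ₂` components, and whether `D` contains the top of `Λ_{3(ℓ-1)}`. Conversely,
for `ℓ ≥ 2`, `k` is the number of elements with exactly two elements below them, and the big top is
the only possible element with at least three. A downset of size `3ℓ` containing the big component
(`3ℓ - 2` elements) has no room for a full `Λ₂`; the remaining combinations, `k ≤ ℓ` without the big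
top or `k = 0` with it, all occur, giving `ℓ + 2` classes.
-/

-- Lets `simp` and `rw` see elements of `Hposet l` and `subposet Q D` as sums and subtypes.
attribute [reducible] subposet Hposet

section Isolated

variable {α β : Type*} [PartialOrder α] [PartialOrder β]

def IsIsolated (x : α) : Prop := ∀ y, x ≤ y ∨ y ≤ x → y = x

lemma IsIsolated.le_iff_eq {x : α} (hx : IsIsolated x) {y : α} : x ≤ y ↔ x = y :=
  ⟨fun h => (hx y (Or.inl h)).symm, le_of_eq⟩

lemma IsIsolated.subtype {p : α → Prop} {x : {x // p x}} (hx : IsIsolated (x : α)) :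
    IsIsolated x :=
  fun y hy => Subtype.ext (hx y hy)

def orderIsoSumComplOfIsIsolated (p : α → Prop) [DecidablePred p]
    (h : ∀ x, ¬p x → IsIsolated x) : {x // p x} ⊕ {x // ¬p x} ≃o α where
  toEquiv := Equiv.sumCompl p
  map_rel_iff' := by
    have hne (a : {x // p x}) (b : {x // ¬p x}) : (a : α) ≠ b := fun e => b.2 (e ▸ a.2)
    rintro (a | a) (b | b) <;>
      simp only [Equiv.sumCompl_apply_inl, Equiv.sumCompl_apply_inr, Sum.inl_le_inl_iff,
        Sum.inr_le_inr_iff, Subtype.coe_le_coe, Sum.not_inl_le_inr, Sum.not_inr_le_inl, iff_false]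
    · exact fun hab => hne a b (h b b.2 a (Or.inr hab))
    · exact fun hab => hne b a (h a a.2 b (Or.inl hab))

def Equiv.toOrderIsoOfIsIsolated (e : α ≃ β) (hα : ∀ x : α, IsIsolated x)
    (hβ : ∀ y : β, IsIsolated y) : α ≃o β where
  toEquiv := e
  map_rel_iff' := by
    intro a b
    rw [(hα a).le_iff_eq, (hβ (e a)).le_iff_eq, e.apply_eq_iff_eq]

theorem nonempty_orderIso_of_isIsolated_compl [Fintype α] [Fintype β] (p : α → Prop)
    (q : β → Prop) (hp : ∀ x, ¬p x → IsIsolated x) (hq : ∀ y, ¬q y → IsIsolated y)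
    (e : {x // p x} ≃o {y // q y}) (hcard : Fintype.card α = Fintype.card β) :
    Nonempty (α ≃o β) := by
  have hcompl : Fintype.card {x // ¬p x} = Fintype.card {y // ¬q y} := by
    rw [Fintype.card_subtype_compl, Fintype.card_subtype_compl, hcard,
      Fintype.card_congr e.toEquiv]
  let f := (Fintype.equivOfCardEq hcompl).toOrderIsoOfIsIsolated
    (fun x => (hp x x.2).subtype) (fun y => (hq y y.2).subtype)
  exact ⟨((orderIsoSumComplOfIsIsolated p hp).symm.trans (e.sumCongr f)).trans
    (orderIsoSumComplOfIsIsolated q hq)⟩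

def OrderIso.subtypeSubtype {p q : α → Prop} (h : ∀ {x}, q x → p x) :
    {x : Subtype p // q x.1} ≃o Subtype q where
  toEquiv := Equiv.subtypeSubtypeEquivSubtype h
  map_rel_iff' := Iff.rfl

def OrderIso.subtypeEquiv (e : α ≃o β) {p : α → Prop} {q : β → Prop}
    (h : ∀ a, p a ↔ q (e a)) : {a // p a} ≃o {b // q b} where
  toEquiv := e.toEquiv.subtypeEquiv h
  map_rel_iff' := e.le_iff_le

end Isolated

section CountBelow

def nBelow (Q : FinPartOrd.{0}) (x : Q) : ℕ := #{y | y < x}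

lemma nBelow_orderIso {P Q : FinPartOrd.{0}} (e : P ≃o Q) (x : P) :
    nBelow Q (e x) = nBelow P x :=
  (Finset.card_equiv e.toEquiv (by simp)).symm

variable (p : ℕ → Prop) [DecidablePred p]

def countNBelow (Q : FinPartOrd.{0}) : ℕ := #{x | p (nBelow Q x)}

lemma countNBelow_orderIso {P Q : FinPartOrd.{0}} (e : P ≃o Q) :
    countNBelow p P = countNBelow p Q :=
  Finset.card_equiv e.toEquiv (by simp [nBelow_orderIso])

def UPoset.countNBelow : UPoset → ℕ :=
  Quotient.lift (_root_.countNBelow p) fun _ _ ⟨e⟩ => countNBelow_orderIso p e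

@[simp] lemma UPoset.countNBelow_cls (Q : FinPartOrd.{0}) :
    UPoset.countNBelow p (cls Q) = _root_.countNBelow p Q := rfl

variable {Q : FinPartOrd.{0}} {D : Finset Q}

lemma nBelow_subposet (hD : IsDownset Q D) (x : subposet Q D) :
    nBelow (subposet Q D) x = nBelow Q x.1 := by
  rw [nBelow, ← Finset.card_map (Function.Embedding.subtype _)]
  congr 1
  ext y
  simp only [Finset.mem_map, Finset.mem_filter, Finset.mem_univ, true_and,
    Function.Embedding.subtype_apply]
  exact ⟨fun ⟨z, hz, hzy⟩ => hzy ▸ hz, fun hy => ⟨⟨y, hD x.2 hy.le⟩, hy, rfl⟩⟩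

lemma countNBelow_subposet (hD : IsDownset Q D) :
    countNBelow p (subposet Q D) = #{x ∈ D | p (nBelow Q x)} := by
  rw [countNBelow, ← Finset.card_map (Function.Embedding.subtype _)]
  congr 1
  ext y
  simp only [Finset.mem_map, Finset.mem_filter, Finset.mem_univ, true_and,
    Function.Embedding.subtype_apply, nBelow_subposet hD]
  exact ⟨fun ⟨z, hz, hzy⟩ => hzy ▸ ⟨z.2, hz⟩,
    fun hy => ⟨⟨y, hy.1⟩, hy.2, rfl⟩⟩

end CountBelow

lemma AntichainFin.withTop_le_iff {n : ℕ} (u v : WithTop (AntichainFin n)) :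
    u ≤ v ↔ u = v ∨ v = ⊤ := by
  cases v with
  | top => simp
  | coe b =>
    cases u with
    | top => simp
    | coe a => simp only [WithTop.coe_le_coe, WithTop.coe_eq_coe, WithTop.coe_ne_top, or_false]; rfl

lemma AntichainFin.card (n : ℕ) : Fintype.card (AntichainFin n) = n :=
  Fintype.card_fin n

lemma AntichainFin.card_withTop (n : ℕ) : Fintype.card (WithTop (AntichainFin n)) = n + 1 :=
  (Fintype.card_option (α := Fin n)).trans (congrArg (· + 1) (Fintype.card_fin n))

namespace Copies

variable {k : ℕ} {α : Type}

-- A pair literal would have type `Fin k × α` rather than `Copies k α`, which `simp` does not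
-- see through.
def mk (i : Fin k) (a : α) : Copies k α := (i, a)

@[simp] lemma mk_fst (i : Fin k) (a : α) : (mk i a).1 = i := rfl

@[simp] lemma mk_snd (i : Fin k) (a : α) : (mk i a).2 = a := rfl

lemma exists_eq_mk (x : Copies k α) : ∃ i a, x = mk i a := ⟨x.1, x.2, rfl⟩

lemma ext_iff {x y : Copies k α} : x = y ↔ x.1 = y.1 ∧ x.2 = y.2 := Prod.ext_iff

lemma le_iff [PartialOrder α] {x y : Copies k α} : x ≤ y ↔ x.1 = y.1 ∧ x.2 ≤ y.2 :=
  Iff.rfl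

def equivProd : Copies k α ≃ Fin k × α := Equiv.refl _

@[simp] lemma equivProd_apply (x : Copies k α) : equivProd x = (x.1, x.2) := rfl

def permOrderIso [PartialOrder α] (π : Equiv.Perm (Fin k)) : Copies k α ≃o Copies k α where
  toFun x := mk (π x.1) x.2
  invFun x := mk (π.symm x.1) x.2
  left_inv x := by simp only [mk_fst, mk_snd, Equiv.symm_apply_apply]; rfl
  right_inv x := by simp only [mk_fst, mk_snd, Equiv.apply_symm_apply]; rfl
  map_rel_iff' := by simp [le_iff]

end Copies

namespace Hposet

abbrev Carrier (l : ℕ) : Type :=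
  Copies l (WithTop (AntichainFin 2)) ⊕ WithTop (AntichainFin (3 * (l - 1)))

variable {l : ℕ}

def compTop : Carrier l → Carrier l
  | .inl a => .inl (.mk a.1 ⊤)
  | .inr _ => .inr ⊤

@[simp] lemma compTop_inl (a : Copies l (WithTop (AntichainFin 2))) :
    compTop (.inl a : Carrier l) = .inl (.mk a.1 ⊤) := rfl

@[simp] lemma compTop_inr (v : WithTop (AntichainFin (3 * (l - 1)))) :
    compTop (.inr v : Carrier l) = .inr ⊤ := rfl

@[simp] lemma compTop_compTop (x : Carrier l) : compTop (compTop x) = compTop x := by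
  rcases x with a | v <;> rfl

lemma le_iff {x y : Carrier l} : x ≤ y ↔ x = y ∨ y = compTop x := by
  rcases x with a | v <;> rcases y with b | w
  · simp only [Sum.inl_le_inl_iff, Copies.le_iff, AntichainFin.withTop_le_iff, Sum.inl.injEq,
      Copies.ext_iff, compTop_inl, Copies.mk_fst, Copies.mk_snd]
    tauto
  · simp
  · simp
  · simp [AntichainFin.withTop_le_iff]

lemma lt_iff {x y : Carrier l} : x < y ↔ x ≠ y ∧ y = compTop x := by
  rw [lt_iff_le_and_ne, le_iff]
  tauto

lemma le_compTop (x : Carrier l) : x ≤ compTop x := le_iff.2 (Or.inr rfl)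

lemma isDownset_iff {D : Finset (Carrier l)} :
    IsDownset (Hposet l) D ↔ ∀ x, compTop x ∈ D → x ∈ D :=
  ⟨fun hD x hx => hD hx (le_compTop x), fun h _ b ha hba =>
    (le_iff.1 hba).elim (fun e => e ▸ ha) (fun e => h b (e ▸ ha))⟩

lemma isIsolated_of_compTop_notMem {D : Finset (Carrier l)} (x : {x // x ∈ D})
    (hx : compTop x.1 ∉ D) : IsIsolated x := by
  intro y hy
  apply Subtype.ext
  rcases hy with h | h <;> rcases le_iff.1 h with e | e
  · exact e.symm
  · exact absurd (e ▸ y.2) hx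
  · exact e
  · have hxtop : compTop x.1 = x.1 := by rw [e, compTop_compTop]
    exact absurd (by rw [hxtop]; exact x.2) hx

def permOrderIso (π : Equiv.Perm (Fin l)) : Carrier l ≃o Carrier l :=
  (Copies.permOrderIso π).sumCongr (OrderIso.refl _)

@[simp] lemma permOrderIso_inl (π : Equiv.Perm (Fin l))
    (a : Copies l (WithTop (AntichainFin 2))) :
    permOrderIso π (.inl a) = .inl (.mk (π a.1) a.2) := rfl

@[simp] lemma permOrderIso_inr (π : Equiv.Perm (Fin l))
    (v : WithTop (AntichainFin (3 * (l - 1)))) :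
    permOrderIso π (.inr v) = .inr v := rfl

def fullIndices (D : Finset (Carrier l)) : Finset (Fin l) :=
  {i | .inl (.mk i ⊤) ∈ D}

@[simp] lemma mem_fullIndices {D : Finset (Carrier l)} {i : Fin l} :
    i ∈ fullIndices D ↔ .inl (.mk i ⊤) ∈ D := by
  simp [fullIndices]

theorem nonempty_orderIso_of_card_fullIndices_eq {D D' : Finset (Carrier l)}
    (hD : IsDownset (Hposet l) D) (hD' : IsDownset (Hposet l) D')
    (hK : #(fullIndices D) = #(fullIndices D')) (hb : .inr ⊤ ∈ D ↔ .inr ⊤ ∈ D')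
    (hcard : #D = #D') : Nonempty (subposet (Hposet l) D ≃o subposet (Hposet l) D') := by
  set π := (Finset.equivOfCardEq hK).extendSubtype
  have hπ (i : Fin l) : i ∈ fullIndices D ↔ π i ∈ fullIndices D' := by
    by_cases hi : i ∈ fullIndices D
    · exact iff_of_true hi (Equiv.extendSubtype_mem _ i hi)
    · exact iff_of_false hi (Equiv.extendSubtype_not_mem _ i hi)
  have hperm (x : Carrier l) : compTop x ∈ D ↔ compTop (permOrderIso π x) ∈ D' := by
    rcases x with a | v
    · simpa using hπ a.1
    · simpa using hb
  rw [isDownset_iff] at hD hD'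
  let e : {x : {x // x ∈ D} // compTop x.1 ∈ D} ≃o {y : {y // y ∈ D'} // compTop y.1 ∈ D'} :=
    (OrderIso.subtypeSubtype (hD _)).trans
      (((permOrderIso π).subtypeEquiv hperm).trans (OrderIso.subtypeSubtype (hD' _)).symm)
  exact nonempty_orderIso_of_isIsolated_compl _ _ isIsolated_of_compTop_notMem
    isIsolated_of_compTop_notMem e
    ((Fintype.card_coe D).trans (hcard.trans (Fintype.card_coe D').symm))

lemma nBelow_inl (a : Copies l (WithTop (AntichainFin 2))) :
    nBelow (Hposet l) (.inl a) = if a.2 = ⊤ then 2 else 0 := by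
  unfold nBelow
  split_ifs with h
  · have hinj : Function.Injective fun b : AntichainFin 2 => (.inl (.mk a.1 b) : Carrier l) :=
      fun b c e => by simpa [Copies.ext_iff] using e
    trans #(Finset.univ.image fun b : AntichainFin 2 => (.inl (.mk a.1 b) : Carrier l))
    · congr 1
      ext y
      simp only [Finset.mem_filter, Finset.mem_univ, true_and, lt_iff, Finset.mem_image]
      rcases y with b | w
      · obtain ⟨j, u, rfl⟩ := Copies.exists_eq_mk b
        by_cases hj : j = a.1 <;> simp [Copies.ext_iff, h, WithTop.ne_top_iff_exists, eq_comm, hj]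
      · simp
    · rw [Finset.card_image_of_injective _ hinj, Finset.card_univ, AntichainFin.card]
  · rw [Finset.card_eq_zero, Finset.filter_eq_empty_iff]
    rintro (b | w) - <;> rw [lt_iff] <;> simp [Copies.ext_iff, h]

lemma nBelow_inr (v : WithTop (AntichainFin (3 * (l - 1)))) :
    nBelow (Hposet l) (.inr v) = if v = ⊤ then 3 * (l - 1) else 0 := by
  unfold nBelow
  split_ifs with h
  · trans #(Finset.univ.image fun b : AntichainFin (3 * (l - 1)) => (.inr b : Carrier l))
    · congr 1
      ext y
      simp only [Finset.mem_filter, Finset.mem_univ, true_and, lt_iff, Finset.mem_image]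
      rcases y with b | w <;> simp [h, WithTop.ne_top_iff_exists]
    · rw [Finset.card_image_of_injective _ (fun b c e => by simpa using e), Finset.card_univ,
        AntichainFin.card]
  · rw [Finset.card_eq_zero, Finset.filter_eq_empty_iff]
    rintro (b | w) - <;> rw [lt_iff] <;> simp [h]

lemma nBelow_eq_two_iff {x : Carrier l} :
    nBelow (Hposet l) x = 2 ↔ ∃ i, x = .inl (.mk i ⊤) := by
  rcases x with a | v
  · obtain ⟨i, u, rfl⟩ := Copies.exists_eq_mk a
    by_cases hu : u = ⊤ <;> simp [nBelow_inl, Copies.ext_iff, hu]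
  · have h : nBelow (Hposet l) (.inr v) ≠ 2 := by
      rw [nBelow_inr]
      split_ifs <;> omega
    simpa using h

lemma three_le_nBelow_iff (hl : 2 ≤ l) {x : Carrier l} :
    3 ≤ nBelow (Hposet l) x ↔ x = .inr ⊤ := by
  rcases x with a | v
  · rw [nBelow_inl]
    split_ifs <;> simp
  · rw [nBelow_inr, Sum.inr.injEq]
    split_ifs with hv
    · exact iff_of_true (by omega) hv
    · exact iff_of_false (by omega) hv

lemma countNBelow_eq_two {D : Finset (Carrier l)} (hD : IsDownset (Hposet l) D) :
    countNBelow (· = 2) (subposet (Hposet l) D) = #(fullIndices D) := by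
  have hinj : Function.Injective fun i : Fin l => (.inl (.mk i ⊤) : Carrier l) :=
    fun i j e => by simpa [Copies.ext_iff] using e
  rw [countNBelow_subposet _ hD, ← Finset.card_image_of_injective _ hinj]
  congr 1
  ext x
  simp only [Finset.mem_filter, nBelow_eq_two_iff, Finset.mem_image, mem_fullIndices]
  constructor
  · rintro ⟨hx, i, rfl⟩
    exact ⟨i, hx, rfl⟩
  · rintro ⟨i, hi, rfl⟩
    exact ⟨hi, i, rfl⟩

lemma countNBelow_three_le (hl : 2 ≤ l) {D : Finset (Carrier l)}
    (hD : IsDownset (Hposet l) D) :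
    countNBelow (3 ≤ ·) (subposet (Hposet l) D) = if .inr ⊤ ∈ D then 1 else 0 := by
  rw [countNBelow_subposet _ hD, Finset.filter_congr fun x _ => three_le_nBelow_iff hl,
    Finset.filter_eq']
  split_ifs <;> rfl

def shape (c : UPoset) : ℕ × ℕ := (c.countNBelow (· = 2), c.countNBelow (3 ≤ ·))

lemma shape_cls (hl : 2 ≤ l) {D : Finset (Carrier l)} (hD : IsDownset (Hposet l) D) :
    shape (cls (subposet (Hposet l) D)) =
      (#(fullIndices D), if .inr ⊤ ∈ D then 1 else 0) := by
  simp only [shape, UPoset.countNBelow_cls, countNBelow_eq_two hD, countNBelow_three_le hl hD]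

lemma shape_injOn (hl : 2 ≤ l) (n : ℕ) : Set.InjOn shape (DSet n (Hposet l)) := by
  rintro _ ⟨D, hD, hDn, rfl⟩ _ ⟨D', hD', hD'n, rfl⟩ h
  rw [shape_cls hl hD, shape_cls hl hD', Prod.mk.injEq] at h
  have hb : .inr ⊤ ∈ D ↔ .inr ⊤ ∈ D' := by
    by_cases hb : .inr ⊤ ∈ D <;> by_cases hb' : .inr ⊤ ∈ D' <;> simp [hb, hb'] at h ⊢
  exact Quotient.sound
    (nonempty_orderIso_of_card_fullIndices_eq hD hD' h.1 hb (hDn.trans hD'n.symm))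

def downsetOf (K A : Finset (Fin l)) (B : Finset (WithTop (AntichainFin (3 * (l - 1))))) :
    Finset (Carrier l) :=
  ((K ×ˢ univ ∪ A ×ˢ univ.erase ⊤).map Copies.equivProd.symm.toEmbedding).disjSum B

section DownsetOf

variable {K A : Finset (Fin l)} {B : Finset (WithTop (AntichainFin (3 * (l - 1))))}

@[simp] lemma inl_mem_downsetOf {a : Copies l (WithTop (AntichainFin 2))} :
    .inl a ∈ downsetOf K A B ↔ a.1 ∈ K ∨ a.1 ∈ A ∧ a.2 ≠ ⊤ := by
  simp [downsetOf, Finset.mem_map_equiv]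

@[simp] lemma inr_mem_downsetOf {v : WithTop (AntichainFin (3 * (l - 1)))} :
    .inr v ∈ downsetOf K A B ↔ v ∈ B := by
  simp [downsetOf]

lemma isDownset_downsetOf (hB : ⊤ ∈ B → B = univ) :
    IsDownset (Hposet l) (downsetOf K A B) := by
  rw [isDownset_iff]
  rintro (a | v) h
  · exact inl_mem_downsetOf.2 (Or.inl (by simpa using h))
  · rw [inr_mem_downsetOf, hB (by simpa using h)]
    exact Finset.mem_univ v

lemma fullIndices_downsetOf : fullIndices (downsetOf K A B) = K := by
  ext i
  simp

lemma card_downsetOf (hKA : Disjoint K A) : #(downsetOf K A B) = 3 * #K + 2 * #A + #B := by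
  rw [downsetOf, Finset.card_disjSum, Finset.card_map, Finset.card_union_of_disjoint
    (Finset.disjoint_product.2 (Or.inl hKA)), Finset.card_product, Finset.card_product,
    Finset.card_erase_of_mem (Finset.mem_univ _), Finset.card_univ, AntichainFin.card_withTop]
  ring

end DownsetOf

lemma downsetOf_fullIndices_subset {D : Finset (Carrier l)} (hD : IsDownset (Hposet l) D)
    (hb : .inr ⊤ ∈ D) : downsetOf (fullIndices D) ∅ univ ⊆ D := by
  rw [isDownset_iff] at hD
  rintro (a | v) h
  · exact hD _ (by simpa using h)
  · exact hD _ hb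

lemma fullIndices_eq_empty {D : Finset (Carrier l)} (hD : IsDownset (Hposet l) D)
    (hcard : #D = 3 * l) (hb : .inr ⊤ ∈ D) : fullIndices D = ∅ := by
  have h := Finset.card_le_card (downsetOf_fullIndices_subset hD hb)
  rw [card_downsetOf (Finset.disjoint_empty_right _), Finset.card_univ,
    AntichainFin.card_withTop] at h
  rw [← Finset.card_eq_zero]
  omega

lemma shape_eq_of_mem_DSet (hl : 2 ≤ l) {c : UPoset} (hc : c ∈ DSet (3 * l) (Hposet l)) :
    shape c = (0, 1) ∨ ∃ k ≤ l, shape c = (k, 0) := by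
  obtain ⟨D, hD, hcard, rfl⟩ := hc
  rw [shape_cls hl hD]
  by_cases hb : .inr ⊤ ∈ D
  · simp [hb, fullIndices_eq_empty hD hcard hb]
  · exact Or.inr ⟨#(fullIndices D), (Finset.card_le_univ _).trans_eq (Fintype.card_fin l),
      by simp [hb]⟩

lemma mk_zero_mem_shape_image (hl : 2 ≤ l) {k : ℕ} (hk : k ≤ l) :
    (k, 0) ∈ shape '' DSet (3 * l) (Hposet l) := by
  -- `k` full `Λ₂`s, the minimal elements of the other `l - k`, and `l - k` minimal elements of
  -- the big component: `3k + 2(l - k) + (l - k) = 3l`.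
  obtain ⟨K, -, hK⟩ := Finset.exists_subset_card_eq (s := (univ : Finset (Fin l)))
    (by simpa using hk)
  obtain ⟨B, hBtop, hB⟩ := Finset.exists_subset_card_eq (n := l - k)
    (s := (univ : Finset (WithTop (AntichainFin (3 * (l - 1))))).erase ⊤)
    (by rw [Finset.card_erase_of_mem (Finset.mem_univ _), Finset.card_univ,
      AntichainFin.card_withTop]; omega)
  have htop : ⊤ ∉ B := fun h => by simpa using hBtop h
  have hD := isDownset_downsetOf (K := K) (A := Kᶜ) (fun h => absurd h htop)
  refine ⟨_, ⟨_, hD, ?_, rfl⟩, ?_⟩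
  · rw [card_downsetOf disjoint_compl_right, Finset.card_compl, Fintype.card_fin, hK, hB]
    omega
  · rw [shape_cls hl hD, fullIndices_downsetOf, hK]
    simp [htop]

lemma zero_one_mem_shape_image (hl : 2 ≤ l) :
    ((0, 1) : ℕ × ℕ) ∈ shape '' DSet (3 * l) (Hposet l) := by
  -- The big component and the two minimal elements of one `Λ₂`: `(3l - 2) + 2 = 3l`.
  have hD := isDownset_downsetOf (l := l) (K := ∅) (A := {⟨0, by omega⟩}) (B := univ)
    (fun _ => rfl)
  refine ⟨_, ⟨_, hD, ?_, rfl⟩, ?_⟩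
  · rw [card_downsetOf (Finset.disjoint_empty_left _), Finset.card_univ,
      AntichainFin.card_withTop, Finset.card_empty, Finset.card_singleton]
    omega
  · rw [shape_cls hl hD, fullIndices_downsetOf]
    simp

lemma shape_image_DSet (hl : 2 ≤ l) :
    shape '' DSet (3 * l) (Hposet l) = ↑(insert (0, 1) ((range (l + 1)).image (·, 0))) := by
  ext p
  simp only [Finset.coe_insert, Finset.coe_image, Finset.coe_range, Set.mem_insert_iff,
    Set.mem_image, Set.mem_Iio, Nat.lt_succ_iff]
  constructor
  · rintro ⟨c, hc, rfl⟩
    rcases shape_eq_of_mem_DSet hl hc with h | ⟨k, hk, h⟩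
    · exact Or.inl h
    · exact Or.inr ⟨k, hk, h.symm⟩
  · rintro (rfl | ⟨k, hk, rfl⟩)
    · exact zero_one_mem_shape_image hl
    · exact mk_zero_mem_shape_image hl hk

end Hposet

/-- For `ℓ ≥ 2`, the poset `H_ℓ` has exactly `ℓ + 2` isomorphism classes of
downsets of size `3ℓ`. -/
theorem H_dNum (l : ℕ) (hl : 2 ≤ l) : dNum (3 * l) (Hposet l) = l + 2 := by
  rw [dNum, ← (Hposet.shape_injOn hl _).ncard_image, Hposet.shape_image_DSet hl,
    Set.ncard_coe_finset, Finset.card_insert_of_notMem (by simp),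
    Finset.card_image_of_injective _ (fun _ _ h => (Prod.mk.inj h).1), Finset.card_range]
end
end

section
/- For any finite poset Q and any positive integer n ≤ |Q|, the exchange graph G_n(Q) is connected. Furthermore, for any two vertices A and B of G_n(Q), the graph distance between A and B equals |A \ (A ∩ B)|; in particular the diameter of G_n(Q) is at most n. -/
/-!
Formalization framework: finite posets are bundled as `FinPartOrd.{0}`, downsets are
`Finset`s of elements, unlabelled posets are isomorphism classes (`UPoset`), and a witness
of a set `Γ` of unlabelled posets at size `n` is a finite poset whose set of size-`n`
downsets, up to isomorphism, is exactly `Γ`.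
-/

attribute [local instance] Classical.propDecidable

noncomputable section

open Finset

/-!
A shortest path from `A` to `B` in `G_n(Q)` has length `|A \ B|`. Each edge changes a set by one
element, so `|A \ B|` drops by at most one per step. Conversely, take `a` maximal in `A \ B` and
`b` minimal in `B \ A`. Since `B` is a downset, `a` is maximal in `A`. Since `A` is a downset,
everything strictly below `b` lies in `A \ {a}`. So swapping `a` for `b` keeps `A` a downset,
and `|A \ B|` goes down by one.
-/

namespace IsDownset

variable {Q : FinPartOrd.{0}} {D : Finset ↥Q}

lemma erase (hD : IsDownset Q D) {a : ↥Q} (ha : ∀ c ∈ D, ¬a < c) : IsDownset Q (D.erase a) := by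
  intro c d hc hdc
  obtain ⟨hca, hcD⟩ := mem_erase.mp hc
  refine mem_erase.mpr ⟨?_, hD hcD hdc⟩
  rintro rfl
  exact ha c hcD (lt_of_le_of_ne hdc (Ne.symm hca))

lemma insert (hD : IsDownset Q D) {b : ↥Q} (hb : ∀ c, c < b → c ∈ D) :
    IsDownset Q (insert b D) := by
  intro c d hc hdc
  rcases mem_insert.mp hc with rfl | hcD
  · rcases hdc.eq_or_lt with rfl | hlt
    · exact mem_insert_self _ _
    · exact mem_insert_of_mem (hb d hlt)
  · exact mem_insert_of_mem (hD hcD hdc)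

end IsDownset

lemma exists_isDownset_card (Q : FinPartOrd.{0}) {n : ℕ} (hn : n ≤ Fintype.card ↥Q) :
    ∃ D : Finset ↥Q, IsDownset Q D ∧ D.card = n := by
  induction n with
  | zero => exact ⟨∅, fun _ _ h => absurd h (notMem_empty _), rfl⟩
  | succ k ih =>
    obtain ⟨D, hD, hcard⟩ := ih (by omega)
    have hcompl : Dᶜ.Nonempty := by
      rw [← card_pos, card_compl, hcard]
      omega
    obtain ⟨m, hm⟩ := Finset.exists_minimal hcompl
    have hmD : m ∉ D := mem_compl.mp hm.prop
    refine ⟨insert m D, hD.insert fun c hc => ?_, by rw [card_insert_of_notMem hmD, hcard]⟩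
    by_contra hcD
    exact hm.not_lt (mem_compl.mpr hcD) hc

section ExchangeGraph

variable {n : ℕ} {Q : FinPartOrd.{0}}

lemma card_sdiff_le_length {A B : EGVert n Q} (w : (ExchangeGraph n Q).Walk A B) :
    (A.1 \ B.1).card ≤ w.length := by
  induction w with
  | nil => simp
  | @cons u v z hadj p ih =>
    calc (u.1 \ z.1).card ≤ (v.1 \ z.1 ∪ u.1 \ v.1).card :=
          card_le_card fun x hx => by
            by_cases hxv : x ∈ v.1 <;> simp_all
      _ ≤ (v.1 \ z.1).card + (u.1 \ v.1).card := card_union_le _ _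
      _ ≤ (SimpleGraph.Walk.cons hadj p).length := by
          rw [SimpleGraph.Walk.length_cons, hadj.1]
          omega

lemma exists_adj_card_sdiff_add_one {A B : EGVert n Q} (hAB : A ≠ B) :
    ∃ A' : EGVert n Q, (ExchangeGraph n Q).Adj A A' ∧ (A'.1 \ B.1).card + 1 = (A.1 \ B.1).card := by
  rcases A with ⟨A, hAd, hAc⟩
  rcases B with ⟨B, hBd, hBc⟩
  have hAB' : (A \ B).Nonempty := sdiff_nonempty.mpr fun hsub =>
    hAB (Subtype.ext (eq_of_subset_of_card_le hsub (by rw [hAc, hBc])))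
  have hBA' : (B \ A).Nonempty := by
    rw [← card_pos, card_sdiff_comm (by rw [hAc, hBc]), card_pos]
    exact hAB'
  obtain ⟨a, ha⟩ := Finset.exists_maximal hAB'
  obtain ⟨b, hb⟩ := Finset.exists_minimal hBA'
  obtain ⟨haA, haB⟩ := mem_sdiff.mp ha.prop
  obtain ⟨hbB, hbA⟩ := mem_sdiff.mp hb.prop
  have ha_max : ∀ c ∈ A, ¬a < c := fun c hcA hac =>
    ha.not_gt (mem_sdiff.mpr ⟨hcA, fun hcB => haB (hBd hcB hac.le)⟩) hac
  have hb_min : ∀ c, c < b → c ∈ A.erase a := fun c hcb => by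
    have hcB := hBd hbB hcb.le
    have hcA : c ∈ A := by_contra fun hcA => hb.not_lt (mem_sdiff.mpr ⟨hcB, hcA⟩) hcb
    exact mem_erase.mpr ⟨fun hca => haB (hca ▸ hcB), hcA⟩
  refine ⟨⟨insert b (A.erase a), (hAd.erase ha_max).insert hb_min, ?_⟩, ⟨?_, ?_⟩, ?_⟩
  · have hbA' : b ∉ A.erase a := fun h => hbA (mem_of_mem_erase h)
    have hpos : 0 < A.card := card_pos.mpr ⟨a, haA⟩
    rw [card_insert_of_notMem hbA', card_erase_of_mem haA]
    omega
  · rw [card_eq_one]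
    exact ⟨a, by ext x; by_cases x = a <;> by_cases x = b <;> simp_all⟩
  · rw [card_eq_one]
    exact ⟨b, by ext x; by_cases x = a <;> by_cases x = b <;> simp_all⟩
  · have : insert b (A.erase a) \ B = (A \ B).erase a := by
      ext x; by_cases x = a <;> by_cases x = b <;> simp_all
    rw [this, card_erase_add_one ha.prop]

lemma exists_walk_length_eq_card_sdiff (A B : EGVert n Q) :
    ∃ w : (ExchangeGraph n Q).Walk A B, w.length = (A.1 \ B.1).card := by
  induction hk : (A.1 \ B.1).card generalizing A with
  | zero =>
    obtain rfl : A = B := Subtype.ext <|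
      eq_of_subset_of_card_le (sdiff_eq_empty_iff_subset.mp (card_eq_zero.mp hk))
        (by rw [A.2.2, B.2.2])
    exact ⟨.nil, rfl⟩
  | succ k ih =>
    have hAB : A ≠ B := by
      rintro rfl
      simp at hk
    obtain ⟨A', hadj, hA'⟩ := exists_adj_card_sdiff_add_one hAB
    obtain ⟨w, hw⟩ := ih A' (by omega)
    exact ⟨.cons hadj w, by rw [SimpleGraph.Walk.length_cons, hw]⟩

lemma exchangeGraph_preconnected : (ExchangeGraph n Q).Preconnected := fun A B =>
  (exists_walk_length_eq_card_sdiff A B).elim fun w _ => ⟨w⟩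

lemma exchangeGraph_dist_eq_card_sdiff (A B : EGVert n Q) :
    (ExchangeGraph n Q).dist A B = (A.1 \ B.1).card := by
  obtain ⟨w, hw⟩ := exists_walk_length_eq_card_sdiff A B
  obtain ⟨w', hw'⟩ := (exchangeGraph_preconnected A B).exists_walk_length_eq_dist
  exact le_antisymm (hw ▸ SimpleGraph.dist_le w) (hw' ▸ card_sdiff_le_length w')

end ExchangeGraph

theorem exchangeGraph_connected_dist_general (n : ℕ) (Q : FinPartOrd.{0})
    (hnQ : n ≤ size Q) :
    (ExchangeGraph n Q).Connected ∧
      (∀ A B : EGVert n Q, (ExchangeGraph n Q).dist A B = (A.1 \ (A.1 ∩ B.1)).card) ∧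
      ∀ A B : EGVert n Q, (ExchangeGraph n Q).dist A B ≤ n := by
  obtain ⟨D, hD, hDcard⟩ := exists_isDownset_card Q hnQ
  refine ⟨(SimpleGraph.connected_iff _).mpr ⟨exchangeGraph_preconnected, ⟨⟨D, hD, hDcard⟩⟩⟩,
    fun A B => ?_, fun A B => ?_⟩
  · rw [exchangeGraph_dist_eq_card_sdiff, sdiff_inter_self_left]
  · rw [exchangeGraph_dist_eq_card_sdiff]
    exact (card_le_card sdiff_subset).trans_eq A.2.2

/-- For any finite poset `Q` and `1 ≤ n ≤ |Q|`, the exchange graph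
`G_n(Q)` is connected; moreover the graph distance between two vertices `A`, `B` is
`|A \\ (A ∩ B)|`, and in particular the diameter of `G_n(Q)` is at most `n`. -/
theorem exchangeGraph_connected_dist (n : ℕ) (Q : FinPartOrd.{0}) (hn : 1 ≤ n)
    (hnQ : n ≤ size Q) :
    (ExchangeGraph n Q).Connected ∧
      (∀ A B : EGVert n Q, (ExchangeGraph n Q).dist A B = (A.1 \ (A.1 ∩ B.1)).card) ∧
      ∀ A B : EGVert n Q, (ExchangeGraph n Q).dist A B ≤ n :=
  exchangeGraph_connected_dist_general n Q hnQ
end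
end
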